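/- (Degenerate case, equation (A.4) of the paper.) Suppose μ = a₀·1_d for some a₀ ∈ ℝ. Then {i : (Σ^{-1}μ)_i ≠ 0} ⊆ {i : (Σ^{-1}1_d)_i ≠ 0}, so S* = {i : (Σ^{-1}1_d)_i ≠ 0}; moreover a subset S ⊆ {1,…,d} spans the mean-variance frontier if and only if S ⊇ {i : (Σ^{-1}1_d)_i ≠ 0}. -/

import Mathlib

/-!
Since `μ` is a multiple of `1`, the mean constraint is redundant at `p = a₀` and infeasible
elsewhere. Writing `m = Σ⁻¹1 / (1ᵀΣ⁻¹1)`, every fully invested `x` has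
`xᵀΣx = 1 / (1ᵀΣ⁻¹1) + (x - m)ᵀΣ(x - m)`, so the infimum over portfolios supported on `S` is
the global minimum as soon as `S` contains the support of `m`. If some `i` with `mᵢ ≠ 0` is
missing from `S`, then `(x - m)ᵢ = -mᵢ` for every such portfolio, and the Cauchy–Schwarz bound
`yᵢ² ≤ (Σ⁻¹)ᵢᵢ · yᵀΣy` keeps the variance at least `mᵢ² / (Σ⁻¹)ᵢᵢ` above the minimum.
-/

open Matrix

/-- `v_S(p)`: the infimum of portfolio variance over fully invested portfolios
supported on `S` with target mean `p`, valued in `EReal` (so `inf ∅ = +∞`). -/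
noncomputable def vS {d : ℕ} (A : Matrix (Fin d) (Fin d) ℝ) (μ : Fin d → ℝ)
    (S : Set (Fin d)) (p : ℝ) : EReal :=
  sInf {q : EReal | ∃ x : Fin d → ℝ,
    ((fun _ => (1 : ℝ)) ⬝ᵥ x = 1) ∧ (μ ⬝ᵥ x = p) ∧
    (∀ i, i ∉ S → x i = 0) ∧ q = ((x ⬝ᵥ (A *ᵥ x) : ℝ) : EReal)}

/-- `S` spans the mean-variance frontier of the full asset set. -/
def SpansFrontier {d : ℕ} (A : Matrix (Fin d) (Fin d) ℝ) (μ : Fin d → ℝ)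
    (S : Set (Fin d)) : Prop :=
  ∀ p : ℝ, vS A μ S p = vS A μ Set.univ p

namespace Matrix

variable {n : Type*} {A : Matrix n n ℝ}

lemma PosSemidef.isSymm (hA : A.PosSemidef) : A.IsSymm :=
  isHermitian_iff_isSymm.mp hA.isHermitian

variable [Fintype n]

lemma IsSymm.dotProduct_mulVec_comm (hA : A.IsSymm) (x y : n → ℝ) :
    x ⬝ᵥ (A *ᵥ y) = (A *ᵥ x) ⬝ᵥ y := by
  rw [dotProduct_mulVec, ← mulVec_transpose, hA.eq]

lemma PosSemidef.dotProduct_mulVec_sq_le (hA : A.PosSemidef) (x y : n → ℝ) :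
    (x ⬝ᵥ (A *ᵥ y)) ^ 2 ≤ (x ⬝ᵥ (A *ᵥ x)) * (y ⬝ᵥ (A *ᵥ y)) := by
  have hdiscr := discrim_le_zero (a := x ⬝ᵥ (A *ᵥ x)) (b := 2 * (x ⬝ᵥ (A *ᵥ y)))
      (c := y ⬝ᵥ (A *ᵥ y)) fun t => by
    have hnonneg := hA.dotProduct_mulVec_nonneg (t • x + y)
    simp only [star_trivial, mulVec_add, mulVec_smul, dotProduct_add, add_dotProduct,
      dotProduct_smul, smul_dotProduct, smul_eq_mul] at hnonneg
    rw [hA.isSymm.dotProduct_mulVec_comm y x, dotProduct_comm (A *ᵥ y) x] at hnonneg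
    linarith
  rw [discrim] at hdiscr
  linarith

variable [DecidableEq n]

lemma PosDef.mulVec_inv_mulVec (hA : A.PosDef) (v : n → ℝ) : A *ᵥ (A⁻¹ *ᵥ v) = v := by
  rw [mulVec_mulVec, mul_nonsing_inv _ (A.isUnit_iff_isUnit_det.mp hA.isUnit), one_mulVec]

lemma PosDef.sq_apply_le_inv_apply_mul (hA : A.PosDef) (y : n → ℝ) (i : n) :
    y i ^ 2 ≤ A⁻¹ i i * (y ⬝ᵥ (A *ᵥ y)) := by
  set z := A⁻¹ *ᵥ Pi.single i 1
  have hz : A *ᵥ z = Pi.single i 1 := hA.mulVec_inv_mulVec _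
  have hzy : z ⬝ᵥ (A *ᵥ y) = y i := by
    rw [hA.posSemidef.isSymm.dotProduct_mulVec_comm, hz, single_one_dotProduct]
  have hzz : z ⬝ᵥ (A *ᵥ z) = A⁻¹ i i := by
    rw [hz, dotProduct_single_one]
    simp [z]
  simpa [hzy, hzz] using hA.posSemidef.dotProduct_mulVec_sq_le z y

noncomputable def minVarPortfolio (A : Matrix n n ℝ) (u : n → ℝ) : n → ℝ :=
  (u ⬝ᵥ (A⁻¹ *ᵥ u))⁻¹ • (A⁻¹ *ᵥ u)

variable {u : n → ℝ}

lemma PosDef.mulVec_minVarPortfolio (hA : A.PosDef) :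
    A *ᵥ minVarPortfolio A u = (u ⬝ᵥ (A⁻¹ *ᵥ u))⁻¹ • u := by
  rw [minVarPortfolio, mulVec_smul, hA.mulVec_inv_mulVec]

lemma PosDef.dotProduct_inv_mulVec_pos (hA : A.PosDef) (hu : u ≠ 0) :
    0 < u ⬝ᵥ (A⁻¹ *ᵥ u) := by
  simpa using hA.inv.dotProduct_mulVec_pos hu

lemma PosDef.dotProduct_minVarPortfolio (hA : A.PosDef) (hu : u ≠ 0) :
    u ⬝ᵥ minVarPortfolio A u = 1 := by
  rw [minVarPortfolio, dotProduct_smul, smul_eq_mul,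
    inv_mul_cancel₀ (hA.dotProduct_inv_mulVec_pos hu).ne']

lemma PosDef.minVarPortfolio_apply_eq_zero_iff (hA : A.PosDef) (hu : u ≠ 0) (i : n) :
    minVarPortfolio A u i = 0 ↔ (A⁻¹ *ᵥ u) i = 0 := by
  simp [minVarPortfolio, (hA.dotProduct_inv_mulVec_pos hu).ne']

lemma PosDef.minVarPortfolio_dotProduct_mulVec (hA : A.PosDef) (hu : u ≠ 0) :
    minVarPortfolio A u ⬝ᵥ (A *ᵥ minVarPortfolio A u) = (u ⬝ᵥ (A⁻¹ *ᵥ u))⁻¹ := by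
  rw [hA.mulVec_minVarPortfolio, dotProduct_smul, dotProduct_comm _ u,
    hA.dotProduct_minVarPortfolio hu, smul_eq_mul, mul_one]

/-- The cross term vanishes because `A` maps the minimiser to a multiple of `u`,
which is orthogonal to every difference of two points of the hyperplane `u ⬝ᵥ x = 1`. -/
lemma PosDef.dotProduct_mulVec_eq_add (hA : A.PosDef) (hu : u ≠ 0) {x : n → ℝ}
    (hx : u ⬝ᵥ x = 1) :
    x ⬝ᵥ (A *ᵥ x) = (u ⬝ᵥ (A⁻¹ *ᵥ u))⁻¹ +
      (x - minVarPortfolio A u) ⬝ᵥ (A *ᵥ (x - minVarPortfolio A u)) := by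
  set m := minVarPortfolio A u
  set y := x - m
  have hy : u ⬝ᵥ y = 0 := by
    rw [dotProduct_sub, hx, hA.dotProduct_minVarPortfolio hu, sub_self]
  have hym : y ⬝ᵥ (A *ᵥ m) = 0 := by
    rw [hA.mulVec_minVarPortfolio, dotProduct_smul, dotProduct_comm y u, hy, smul_zero]
  have hx' : x = m + y := (add_sub_cancel m x).symm
  rw [hx', mulVec_add, dotProduct_add, add_dotProduct, add_dotProduct,
    hA.posSemidef.isSymm.dotProduct_mulVec_comm m y, dotProduct_comm (A *ᵥ m) y, hym,
    hA.minVarPortfolio_dotProduct_mulVec hu]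
  ring

end Matrix

section vS

variable {d : ℕ} {A : Matrix (Fin d) (Fin d) ℝ} {μ : Fin d → ℝ}

lemma vS_le {S : Set (Fin d)} {x : Fin d → ℝ} (h1 : (fun _ => (1 : ℝ)) ⬝ᵥ x = 1)
    (hS : ∀ i ∉ S, x i = 0) : vS A μ S (μ ⬝ᵥ x) ≤ ((x ⬝ᵥ (A *ᵥ x) : ℝ) : EReal) :=
  sInf_le ⟨x, h1, rfl, hS, rfl⟩

lemma le_vS {S : Set (Fin d)} {b : ℝ} (p : ℝ)
    (h : ∀ x, (fun _ => (1 : ℝ)) ⬝ᵥ x = 1 → (∀ i ∉ S, x i = 0) → b ≤ x ⬝ᵥ (A *ᵥ x)) :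
    (b : EReal) ≤ vS A μ S p := by
  refine le_sInf ?_
  rintro q ⟨x, h1, -, hS, rfl⟩
  exact EReal.coe_le_coe_iff.mpr (h x h1 hS)

lemma vS_eq_top_of_ne {a₀ p : ℝ} (hμ : μ = a₀ • fun _ => (1 : ℝ)) (hp : p ≠ a₀)
    (S : Set (Fin d)) : vS A μ S p = ⊤ := by
  refine sInf_eq_top.mpr ?_
  rintro q ⟨x, h1, h2, -, -⟩
  rw [hμ, smul_dotProduct, h1, smul_eq_mul, mul_one] at h2
  exact absurd h2.symm hp

lemma Matrix.PosDef.inv_le_vS (hA : A.PosDef) (hu : (fun _ => (1 : ℝ)) ≠ (0 : Fin d → ℝ))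
    (S : Set (Fin d)) (p : ℝ) :
    ((((fun _ => 1) ⬝ᵥ (A⁻¹ *ᵥ fun _ => 1))⁻¹ : ℝ) : EReal) ≤ vS A μ S p :=
  le_vS p fun x hx _ => by
    rw [hA.dotProduct_mulVec_eq_add hu hx]
    simpa using hA.posSemidef.dotProduct_mulVec_nonneg (x - minVarPortfolio A fun _ => 1)

lemma Matrix.PosDef.add_sq_div_le_vS (hA : A.PosDef) (hu : (fun _ => (1 : ℝ)) ≠ (0 : Fin d → ℝ))
    {S : Set (Fin d)} {i : Fin d} (hi : i ∉ S) (p : ℝ) :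
    ((((fun _ => 1) ⬝ᵥ (A⁻¹ *ᵥ fun _ => 1))⁻¹ +
      minVarPortfolio A (fun _ => 1) i ^ 2 / A⁻¹ i i : ℝ) : EReal) ≤ vS A μ S p :=
  le_vS p fun x hx hS => by
    have hcoord := hA.sq_apply_le_inv_apply_mul (x - minVarPortfolio A fun _ => 1) i
    rw [Pi.sub_apply, hS i hi, zero_sub, neg_sq] at hcoord
    rw [hA.dotProduct_mulVec_eq_add hu hx]
    gcongr
    exact (div_le_iff₀' hA.inv.diag_pos).mpr hcoord

lemma Matrix.PosDef.vS_eq_inv_of_subset (hA : A.PosDef)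
    (hu : (fun _ => (1 : ℝ)) ≠ (0 : Fin d → ℝ)) {a₀ : ℝ} (hμ : μ = a₀ • fun _ => (1 : ℝ))
    {S : Set (Fin d)} (hS : {i | (A⁻¹ *ᵥ fun _ => (1 : ℝ)) i ≠ 0} ⊆ S) :
    vS A μ S a₀ = ((((fun _ => 1) ⬝ᵥ (A⁻¹ *ᵥ fun _ => 1))⁻¹ : ℝ) : EReal) := by
  have hmean : μ ⬝ᵥ minVarPortfolio A (fun _ => 1) = a₀ := by
    rw [hμ, smul_dotProduct, hA.dotProduct_minVarPortfolio hu, smul_eq_mul, mul_one]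
  refine le_antisymm ?_ (hA.inv_le_vS hu S a₀)
  rw [← hmean, ← hA.minVarPortfolio_dotProduct_mulVec hu]
  refine vS_le (hA.dotProduct_minVarPortfolio hu) fun i hi => ?_
  exact (hA.minVarPortfolio_apply_eq_zero_iff hu i).mpr (not_not.mp fun h => hi (hS h))

end vS

/-- degenerate case, equation (A.4) of the paper: if `μ = a₀·1`,
then the support of `Σ⁻¹μ` is contained in that of `Σ⁻¹1`, `S*` equals the support
of `Σ⁻¹1`, and `S` spans iff it contains this support. -/
theorem degenerate_case_spanning
    {d : ℕ} (hd : 2 ≤ d) (A : Matrix (Fin d) (Fin d) ℝ) (hA : A.PosDef)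
    (μ : Fin d → ℝ) (a₀ : ℝ) (hμ : μ = a₀ • (fun _ => (1 : ℝ))) :
    ({i : Fin d | (A⁻¹ *ᵥ μ) i ≠ 0} ⊆ {i : Fin d | (A⁻¹ *ᵥ fun _ => (1 : ℝ)) i ≠ 0}) ∧
    ({i : Fin d | (A⁻¹ *ᵥ μ) i ≠ 0 ∨ (A⁻¹ *ᵥ fun _ => (1 : ℝ)) i ≠ 0}
      = {i : Fin d | (A⁻¹ *ᵥ fun _ => (1 : ℝ)) i ≠ 0}) ∧
    (∀ S : Set (Fin d), SpansFrontier A μ S ↔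
      {i : Fin d | (A⁻¹ *ᵥ fun _ => (1 : ℝ)) i ≠ 0} ⊆ S) := by
  have hu : (fun _ => (1 : ℝ)) ≠ (0 : Fin d → ℝ) :=
    fun h => one_ne_zero (congrFun h ⟨0, by omega⟩)
  have hsupp : {i | (A⁻¹ *ᵥ μ) i ≠ 0} ⊆ {i | (A⁻¹ *ᵥ fun _ => (1 : ℝ)) i ≠ 0} := by
    intro i hi
    rw [hμ, mulVec_smul] at hi
    exact right_ne_zero_of_mul hi
  refine ⟨hsupp, Set.ext fun i => or_iff_right_of_imp (@hsupp i), fun S => ⟨?_, fun hS p => ?_⟩⟩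
  · intro hspan i hi
    by_contra hiS
    have hle := (hA.add_sq_div_le_vS hu hiS a₀).trans_eq
      ((hspan a₀).trans (hA.vS_eq_inv_of_subset hu hμ (Set.subset_univ _)))
    have hmi : minVarPortfolio A (fun _ => 1) i ≠ 0 :=
      (hA.minVarPortfolio_apply_eq_zero_iff hu i).not.mpr hi
    have hgap : 0 < minVarPortfolio A (fun _ => 1) i ^ 2 / A⁻¹ i i :=
      div_pos (by positivity) hA.inv.diag_pos
    rw [EReal.coe_le_coe_iff] at hle
    linarith
  · by_cases hp : p = a₀
    · rw [hp, hA.vS_eq_inv_of_subset hu hμ hS,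
        hA.vS_eq_inv_of_subset hu hμ (Set.subset_univ _)]
    · rw [vS_eq_top_of_ne hμ hp, vS_eq_top_of_ne hμ hp]
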